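/- arXiv:1204.3409 — 7 statements merged into one kernel-verified Lean document; each statement's English description precedes it below -/
import Mathlib

section
/- Fix integers n ≥ 2 and 1 ≤ a ≤ n−1 with gcd(a,n) = 1; let a' be the unique integer with 1 ≤ a' ≤ n−1 and a·a' ≡ 1 (mod n), and let (b₁,…,b_l) be the unique list of integers bᵢ ≥ 2 with Hirzebruch–Jung continued fraction value [b₁,…,b_l] = n/a. Then the correction term k(1/n(1,a)) := −2 + (2 + a + a')/n + Σᵢ₌₁^l (bᵢ − 2) is a nonnegative rational number. -/
/-!
Write `n = b₁ a - m` and `a a' - 1 = n c`. The tail `[b₂, …, b_l]` has value `a / m` with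
`0 < m < a`, `m c ≡ 1 (mod a)`, and a direct computation gives
`k(n, a, a'; b) = k(a, m, c; b₂, …, b_l) + (n - a - 1)² / (n a)`.
Iterating, `k` is a sum of nonnegative squares plus the value `c ≥ 0` reached at the last step,
where `a = 1` and `m = 0`.
-/

/-- The Hirzebruch–Jung continued fraction value of a list of integers:
`hjcf [b₁, …, b_l] = b₁ − 1/(b₂ − 1/(⋯ − 1/b_l))`. -/
def hjcf : List ℤ → ℚ
  | [] => 0
  | b :: l => (b : ℚ) - 1 / hjcf l

/-- `k(1/n(1,a))` with the inverse `a'` and the list `b` as parameters. As in the theorem,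
`b` is coerced to a `List ℚ` (through `List.flatMap`) before the map is applied. -/
def kCorrection (n a a' : ℤ) (b : List ℤ) : ℚ :=
  -2 + (2 + (a : ℚ) + (a' : ℚ)) / (n : ℚ) + (b.map (fun x => (x : ℚ) - 2)).sum

theorem one_lt_hjcf : ∀ {b : List ℤ}, b ≠ [] → (∀ x ∈ b, 2 ≤ x) → 1 < hjcf b
  | [], hne, _ => (hne rfl).elim
  | [x], _, h2 => by
    have hx : (2 : ℚ) ≤ x := by exact_mod_cast h2 x List.mem_cons_self
    simp only [hjcf, div_zero, sub_zero]
    linarith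
  | x :: y :: t, _, h2 => by
    have ih : 1 < hjcf (y :: t) :=
      one_lt_hjcf (List.cons_ne_nil y t) fun z hz => h2 z (List.mem_cons_of_mem x hz)
    have hx : (2 : ℚ) ≤ x := by exact_mod_cast h2 x List.mem_cons_self
    have hinv : 1 / hjcf (y :: t) < 1 := (div_lt_one (by linarith)).2 ih
    rw [hjcf]
    linarith

theorem hjcf_eq_one_div_sub_of_hjcf_cons_eq {x : ℤ} {t : List ℤ} {q : ℚ}
    (h : hjcf (x :: t) = q) : hjcf t = 1 / (x - q) := by
  rw [← h, hjcf]
  simp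

theorem kCorrection_cons {n a a' x m c : ℤ} (t : List ℤ) (hn : n ≠ 0) (ha : a ≠ 0)
    (hm : x * a = n + m) (hc : a * a' = n * c + 1) :
    kCorrection n a a' (x :: t) = kCorrection a m c t + ((n : ℚ) - a - 1) ^ 2 / (n * a) := by
  have hmq : (x : ℚ) * a = n + m := by exact_mod_cast hm
  have hcq : (a : ℚ) * a' = n * c + 1 := by exact_mod_cast hc
  simp only [kCorrection, List.pure_def, List.bind_eq_flatMap, List.flatMap_cons,
    List.cons_append, List.nil_append, List.map_cons, List.sum_cons]
  field_simp
  linear_combination (n : ℚ) * hmq + hcq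

theorem kCorrection_nonneg_of_hjcf_eq {b : List ℤ} (h2 : ∀ x ∈ b, 2 ≤ x) :
    ∀ {n a a' : ℤ}, 0 < n → 0 < a → 0 < a' → n ∣ a * a' - 1 → hjcf b = n / a →
      0 ≤ kCorrection n a a' b := by
  induction b with
  | nil =>
    intro n a a' hn ha _ _ hval
    have hpos : (0 : ℚ) < n / a := by positivity
    exact absurd hval.symm (by simpa [hjcf] using hpos.ne')
  | cons x t ih =>
    intro n a a' hn ha ha' ⟨c, hc⟩ hval
    have ht2 : ∀ y ∈ t, 2 ≤ y := fun y hy => h2 y (List.mem_cons_of_mem x hy)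
    obtain ⟨m, hm⟩ : ∃ m, m = x * a - n := ⟨_, rfl⟩
    rw [kCorrection_cons t hn.ne' ha.ne' (m := m) (c := c) (by rw [hm]; ring) (by linarith)]
    have hsq : 0 ≤ ((n : ℚ) - a - 1) ^ 2 / (n * a) := by positivity
    suffices 0 ≤ kCorrection a m c t by linarith
    have htail : hjcf t = a / m := by
      rw [hjcf_eq_one_div_sub_of_hjcf_cons_eq hval, hm]
      push_cast
      field_simp
    rcases eq_or_ne t [] with rfl | ht
    · -- `n = x a` and `a a' = n c + 1` make `a` a unit
      have hm0 : m = 0 := by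
        have : (a : ℚ) / m = 0 := by simpa [hjcf] using htail.symm
        simpa [ha.ne'] using this
      have ha1 : a = 1 := Int.eq_one_of_mul_eq_one_right ha.le (b := a' - x * c)
        (by linear_combination hc + c * hm - c * hm0)
      have hc0 : 0 ≤ c := by nlinarith
      subst ha1 hm0
      simpa [kCorrection] using hc0
    · have ht1 : 1 < (a : ℚ) / m := htail ▸ one_lt_hjcf ht ht2
      obtain ⟨hm_pos, hma⟩ : 0 < m ∧ m < a := by
        rcases one_lt_div_iff.1 ht1 with ⟨h0, h1⟩ | ⟨h0, h1⟩
        · exact ⟨by exact_mod_cast h0, by exact_mod_cast h1⟩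
        · exact absurd (h1.trans h0) (not_lt.2 (by positivity))
      have hc0 : 0 < c := by nlinarith
      exact ih ht2 ha hm_pos hc0 ⟨x * c - a', by linear_combination hc + c * hm⟩ htail

theorem k_correction_nonneg_general (n a a' : ℤ) (hn : 2 ≤ n) (ha : 1 ≤ a)
    (ha' : 1 ≤ a')
    (hinv : a * a' ≡ 1 [ZMOD n])
    (b : List ℤ) (h2 : ∀ x ∈ b, 2 ≤ x)
    (hval : hjcf b = (n : ℚ) / (a : ℚ)) :
    0 ≤ -2 + (2 + (a : ℚ) + (a' : ℚ)) / (n : ℚ) + (b.map (fun x => (x : ℚ) - 2)).sum :=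
  kCorrection_nonneg_of_hjcf_eq h2 (by omega) (by omega) (by omega) hinv.symm.dvd hval

/-- For a cyclic quotient singularity of type `1/n (1,a)` (so `n ≥ 2`,
`1 ≤ a ≤ n−1`, `gcd(a,n) = 1`), with `a'` the inverse of `a` mod `n`
(`1 ≤ a' ≤ n−1`, `a·a' ≡ 1 (mod n)`) and `(b₁,…,b_l)` the list of integers
`bᵢ ≥ 2` with `[b₁,…,b_l] = n/a`, the correction term
`k(1/n(1,a)) = −2 + (2+a+a')/n + Σᵢ (bᵢ − 2)` is nonnegative. -/
theorem k_correction_nonneg (n a a' : ℤ) (hn : 2 ≤ n) (ha : 1 ≤ a) (han : a ≤ n - 1)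
    (hgcd : Int.gcd a n = 1) (ha' : 1 ≤ a') (ha'n : a' ≤ n - 1)
    (hinv : a * a' ≡ 1 [ZMOD n])
    (b : List ℤ) (hne : b ≠ []) (h2 : ∀ x ∈ b, 2 ≤ x)
    (hval : hjcf b = (n : ℚ) / (a : ℚ)) :
    0 ≤ -2 + (2 + (a : ℚ) + (a' : ℚ)) / (n : ℚ) + (b.map (fun x => (x : ℚ) - 2)).sum :=
  k_correction_nonneg_general n a a' hn ha ha' hinv b h2 hval
end

section
/- Fix integers n ≥ 2 and 1 ≤ a ≤ n−1 with gcd(a,n) = 1. For an integer 1 ≤ q ≤ n−1 with gcd(q,n) = 1, let q' be the unique integer with 1 ≤ q' ≤ n−1 and q·q' ≡ 1 (mod n), let (b₁,…,b_l) be the unique list of integers bᵢ ≥ 2 with Hirzebruch–Jung continued fraction value [b₁,…,b_l] = n/q, and set γ(1/n(1,q)) := (1/6)·((q + q')/n + Σᵢ(bᵢ − 3)). Then γ(1/n(1,a)) = −γ(1/n(1,n−a)). -/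
/-!
The inverse of `n - a` mod `n` is `n - a'`, so the fractional terms of the two γ's add up to `2`.
The values `p = n/a` and `q = n/(n-a)` are dual, `(p - 1)(q - 1) = 1`, and any two expansions with
dual values satisfy `Σ (bᵢ - 3) + Σ (cⱼ - 3) = -2`. This goes by induction on the total length:
if `p < 2` then `b = 2 :: t` and `c = y :: s` with `y ≥ 3`, and `t`, `(y - 1) :: s` are again dual
(`p > 2` is symmetric); `p = 2` forces `b = c = [2]`.
-/

lemma one_lt_hjcf_s4 {b : List ℤ} (hb : b ≠ []) (h2 : ∀ x ∈ b, 2 ≤ x) : 1 < hjcf b := by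
  induction b with
  | nil => exact absurd rfl hb
  | cons x t ih =>
    have hx : (2 : ℚ) ≤ x := by exact_mod_cast h2 x List.mem_cons_self
    rcases eq_or_ne t [] with rfl | ht
    · simp only [hjcf, div_zero, sub_zero]
      linarith
    · have ht1 : 1 < hjcf t := ih ht (List.forall_mem_cons.1 h2).2
      have : 1 / hjcf t < 1 := (div_lt_one (by linarith)).2 ht1
      rw [hjcf]
      linarith

lemma one_div_hjcf_mem_Ico {t : List ℤ} (h2 : ∀ z ∈ t, 2 ≤ z) : 1 / hjcf t ∈ Set.Ico 0 1 := by
  rcases eq_or_ne t [] with rfl | ht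
  · simp [hjcf]
  · have := one_lt_hjcf_s4 ht h2
    exact ⟨by positivity, (div_lt_one (by linarith)).2 this⟩

lemma sub_one_lt_hjcf_cons (x : ℤ) {t : List ℤ} (h2 : ∀ z ∈ t, 2 ≤ z) :
    (x : ℚ) - 1 < hjcf (x :: t) := by
  rw [hjcf]
  linarith [(one_div_hjcf_mem_Ico h2).2]

lemma hjcf_cons_le (x : ℤ) {t : List ℤ} (h2 : ∀ z ∈ t, 2 ≤ z) : hjcf (x :: t) ≤ x := by
  rw [hjcf]
  linarith [(one_div_hjcf_mem_Ico h2).1]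

lemma hjcf_cons_lt (x : ℤ) {t : List ℤ} (ht : t ≠ []) (h2 : ∀ z ∈ t, 2 ≤ z) :
    hjcf (x :: t) < x := by
  rw [hjcf]
  linarith [one_div_pos.2 (zero_lt_one.trans (one_lt_hjcf_s4 ht h2))]

section Head

variable {x : ℤ} {t : List ℤ}

lemma head_eq_two_of_hjcf_lt_two (h2 : ∀ z ∈ x :: t, 2 ≤ z) (h : hjcf (x :: t) < 2) :
    x = 2 ∧ t ≠ [] := by
  have ht2 : ∀ z ∈ t, 2 ≤ z := (List.forall_mem_cons.1 h2).2
  have hlt : (x : ℚ) < 3 := by linarith [sub_one_lt_hjcf_cons x ht2]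
  have hx := h2 x List.mem_cons_self
  refine ⟨?_, ?_⟩
  · have : x < 3 := by exact_mod_cast hlt
    omega
  rintro rfl
  have : (2 : ℚ) ≤ x := by exact_mod_cast hx
  simp only [hjcf, div_zero, sub_zero] at h
  linarith

lemma head_eq_two_of_hjcf_eq_two (h2 : ∀ z ∈ x :: t, 2 ≤ z) (h : hjcf (x :: t) = 2) :
    x = 2 ∧ t = [] := by
  have ht2 : ∀ z ∈ t, 2 ≤ z := (List.forall_mem_cons.1 h2).2
  rcases eq_or_ne t [] with rfl | ht
  · simp only [hjcf, div_zero, sub_zero] at h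
    exact ⟨by exact_mod_cast h, rfl⟩
  · have hlo : (2 : ℚ) < x := h ▸ hjcf_cons_lt x ht ht2
    have hhi : (x : ℚ) < 3 := by linarith [sub_one_lt_hjcf_cons x ht2]
    have : 2 < x := by exact_mod_cast hlo
    have : x < 3 := by exact_mod_cast hhi
    omega

lemma three_le_head_of_two_lt_hjcf (h2 : ∀ z ∈ t, 2 ≤ z) (h : 2 < hjcf (x :: t)) : 3 ≤ x := by
  have : (2 : ℚ) < x := h.trans_le (hjcf_cons_le x h2)
  have : 2 < x := by exact_mod_cast this
  omega

end Head

lemma hjcf_cons_sub_one (y : ℤ) (s : List ℤ) : hjcf ((y - 1) :: s) = hjcf (y :: s) - 1 := by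
  simp only [hjcf]
  push_cast
  ring

lemma dual_tail_of_hjcf_lt_two {x y : ℤ} {t s : List ℤ} (hb2 : ∀ z ∈ x :: t, 2 ≤ z)
    (hc2 : ∀ z ∈ y :: s, 2 ≤ z) (hdual : (hjcf (x :: t) - 1) * (hjcf (y :: s) - 1) = 1)
    (hlt : hjcf (x :: t) < 2) :
    x = 2 ∧ t ≠ [] ∧ 3 ≤ y ∧ (hjcf t - 1) * (hjcf ((y - 1) :: s) - 1) = 1 := by
  obtain ⟨rfl, ht⟩ := head_eq_two_of_hjcf_lt_two hb2 hlt
  have ht2 : ∀ z ∈ t, 2 ≤ z := (List.forall_mem_cons.1 hb2).2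
  have hp := one_lt_hjcf_s4 (List.cons_ne_nil 2 t) hb2
  have hq : 2 < hjcf (y :: s) := by nlinarith
  refine ⟨rfl, ht, three_le_head_of_two_lt_hjcf (List.forall_mem_cons.1 hc2).2 hq, ?_⟩
  have hP : hjcf t ≠ 0 := (zero_lt_one.trans (one_lt_hjcf_s4 ht ht2)).ne'
  have hp' : hjcf (2 :: t) = 2 - 1 / hjcf t := by simp [hjcf]
  rw [hjcf_cons_sub_one]
  rw [hp'] at hdual
  field_simp at hdual
  linear_combination hdual

theorem sum_sub_three_add_sum_sub_three_of_dual :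
    ∀ {b c : List ℤ}, b ≠ [] → c ≠ [] → (∀ z ∈ b, 2 ≤ z) → (∀ z ∈ c, 2 ≤ z) →
      (hjcf b - 1) * (hjcf c - 1) = 1 → (b.map (· - 3)).sum + (c.map (· - 3)).sum = -2
  | x :: t, y :: s, _, _, hb2, hc2, hdual => by
    have hs2 : ∀ z ∈ s, 2 ≤ z := (List.forall_mem_cons.1 hc2).2
    have ht2 : ∀ z ∈ t, 2 ≤ z := (List.forall_mem_cons.1 hb2).2
    simp only [List.map_cons, List.sum_cons]
    rcases lt_trichotomy (hjcf (x :: t)) 2 with hlt | heq | hgt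
    · obtain ⟨rfl, ht, hy, hdual'⟩ := dual_tail_of_hjcf_lt_two hb2 hc2 hdual hlt
      have := sum_sub_three_add_sum_sub_three_of_dual ht (List.cons_ne_nil _ s) ht2
        (List.forall_mem_cons.2 ⟨by omega, hs2⟩) hdual'
      simp only [List.map_cons, List.sum_cons] at this
      linarith
    · obtain ⟨rfl, rfl⟩ := head_eq_two_of_hjcf_eq_two hb2 heq
      have hq : hjcf (y :: s) = 2 := by rw [heq] at hdual; linarith
      obtain ⟨rfl, rfl⟩ := head_eq_two_of_hjcf_eq_two hc2 hq
      norm_num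
    · have hq : hjcf (y :: s) < 2 := by
        nlinarith [one_lt_hjcf_s4 (List.cons_ne_nil x t) hb2]
      obtain ⟨rfl, hs, hx, hdual'⟩ := dual_tail_of_hjcf_lt_two hc2 hb2 (by linarith) hq
      have := sum_sub_three_add_sum_sub_three_of_dual hs (List.cons_ne_nil _ t) hs2
        (List.forall_mem_cons.2 ⟨by omega, ht2⟩) hdual'
      simp only [List.map_cons, List.sum_cons] at this
      linarith
termination_by b c => b.length + c.length

lemma sum_map_cast_sub_three (b : List ℤ) :
    (b.map (fun x => (x : ℚ) - 3)).sum = (((b.map (· - 3)).sum : ℤ) : ℚ) := by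
  induction b with
  | nil => rfl
  | cons x t ih => simp_all

lemma Int.eq_of_mul_modEq_one {n x u v : ℤ} (hu : x * u ≡ 1 [ZMOD n]) (hv : x * v ≡ 1 [ZMOD n])
    (hu0 : 0 ≤ u) (hun : u < n) (hv0 : 0 ≤ v) (hvn : v < n) : u = v := by
  have huv : u ≡ v [ZMOD n] :=
    calc u = u * 1 := (mul_one u).symm
      _ ≡ u * (x * v) [ZMOD n] := hv.symm.mul_left u
      _ = x * u * v := by ring
      _ ≡ 1 * v [ZMOD n] := hu.mul_right v
      _ = v := one_mul v
  rw [← Int.emod_eq_of_lt hu0 hun, ← Int.emod_eq_of_lt hv0 hvn]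
  exact huv

lemma Int.sub_mul_sub_modEq_one {n a a' : ℤ} (h : a * a' ≡ 1 [ZMOD n]) :
    (n - a) * (n - a') ≡ 1 [ZMOD n] :=
  (Int.modEq_iff_dvd.2 ⟨a + a' - n, by ring⟩).trans h

theorem gamma_dual_general (n a a' c' : ℤ) (ha : 1 ≤ a) (han : a ≤ n - 1)
    -- `a'` is the inverse of `a` mod `n`
    (ha' : 1 ≤ a') (ha'n : a' ≤ n - 1) (hinv : a * a' ≡ 1 [ZMOD n])
    -- `c'` is the inverse of `n − a` mod `n`
    (hc' : 1 ≤ c') (hc'n : c' ≤ n - 1) (hinv' : (n - a) * c' ≡ 1 [ZMOD n])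
    -- `b` is the Hirzebruch–Jung expansion of `n/a`
    (b : List ℤ) (hbne : b ≠ []) (hb2 : ∀ x ∈ b, 2 ≤ x)
    (hbval : hjcf b = (n : ℚ) / (a : ℚ))
    -- `c` is the Hirzebruch–Jung expansion of `n/(n−a)`
    (c : List ℤ) (hcne : c ≠ []) (hc2 : ∀ x ∈ c, 2 ≤ x)
    (hcval : hjcf c = (n : ℚ) / ((n : ℚ) - (a : ℚ))) :
    1 / 6 * (((a : ℚ) + (a' : ℚ)) / (n : ℚ) + (b.map (fun x => (x : ℚ) - 3)).sum) =
      -(1 / 6 * ((((n : ℚ) - (a : ℚ)) + (c' : ℚ)) / (n : ℚ) +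
        (c.map (fun x => (x : ℚ) - 3)).sum)) := by
  have hc'_eq : c' = n - a' :=
    Int.eq_of_mul_modEq_one hinv' (Int.sub_mul_sub_modEq_one hinv) (by omega) (by omega)
      (by omega) (by omega)
  have ha0 : (a : ℚ) ≠ 0 := by exact_mod_cast (by omega : a ≠ 0)
  have hna0 : (n : ℚ) - a ≠ 0 := by exact_mod_cast (by omega : n - a ≠ 0)
  have hdual : (hjcf b - 1) * (hjcf c - 1) = 1 := by
    rw [hbval, hcval]
    field_simp
    ring
  have hsum := sum_sub_three_add_sum_sub_three_of_dual hbne hcne hb2 hc2 hdual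
  have hn0 : (n : ℚ) ≠ 0 := by exact_mod_cast (by omega : n ≠ 0)
  rw [sum_map_cast_sub_three, sum_map_cast_sub_three, hc'_eq, Int.cast_sub]
  generalize (b.map (· - 3)).sum = B at hsum ⊢
  generalize (c.map (· - 3)).sum = C at hsum ⊢
  have hsum' : (B : ℚ) + C = -2 := by exact_mod_cast hsum
  field_simp
  linear_combination (n : ℚ) * hsum'

/-- For `n ≥ 2` and `1 ≤ a ≤ n−1` with `gcd(a,n) = 1`, writing, for a cyclic
quotient singularity `1/n (1,q)` with inverse `q'` of `q` mod `n` and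
Hirzebruch–Jung expansion `n/q = [b₁,…,b_l]`,
`γ(1/n(1,q)) = (1/6)((q+q')/n + Σᵢ(bᵢ−3))`, one has
`γ(1/n(1,a)) = −γ(1/n(1,n−a))`. -/
theorem gamma_dual (n a a' c' : ℤ) (hn : 2 ≤ n) (ha : 1 ≤ a) (han : a ≤ n - 1)
    (hgcd : Int.gcd a n = 1)
    -- `a'` is the inverse of `a` mod `n`
    (ha' : 1 ≤ a') (ha'n : a' ≤ n - 1) (hinv : a * a' ≡ 1 [ZMOD n])
    -- `c'` is the inverse of `n − a` mod `n`
    (hc' : 1 ≤ c') (hc'n : c' ≤ n - 1) (hinv' : (n - a) * c' ≡ 1 [ZMOD n])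
    -- `b` is the Hirzebruch–Jung expansion of `n/a`
    (b : List ℤ) (hbne : b ≠ []) (hb2 : ∀ x ∈ b, 2 ≤ x)
    (hbval : hjcf b = (n : ℚ) / (a : ℚ))
    -- `c` is the Hirzebruch–Jung expansion of `n/(n−a)`
    (c : List ℤ) (hcne : c ≠ []) (hc2 : ∀ x ∈ c, 2 ≤ x)
    (hcval : hjcf c = (n : ℚ) / ((n : ℚ) - (a : ℚ))) :
    1 / 6 * (((a : ℚ) + (a' : ℚ)) / (n : ℚ) + (b.map (fun x => (x : ℚ) - 3)).sum) =
      -(1 / 6 * ((((n : ℚ) - (a : ℚ)) + (c' : ℚ)) / (n : ℚ) +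
        (c.map (fun x => (x : ℚ) - 3)).sum)) :=
  gamma_dual_general n a a' c' ha han ha' ha'n hinv hc' hc'n hinv' b hbne hb2 hbval c hcne hc2 hcval
end

section
/- In the symmetric group on 8 letters (Equiv.Perm (Fin 8)), let σ = (3 6 7)(4 5 8) and τ = (1 8 2)(4 5 6). Then the subgroup H generated by σ and τ has order 168 and is isomorphic to PSL(2,7), i.e. to the quotient of the special linear group SL(2, ℤ/7ℤ) by its center. -/
/-!
`SL(2, 𝔽₇)` acts on the eight points of the projective line `ℙ¹(𝔽₇)` with kernel its centre, so
`PSL(2, 𝔽₇)`, of order `336 / 2 = 168`, embeds in `S₈`. Under a suitable labelling of `ℙ¹(𝔽₇)` by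
`1, …, 8` the permutations `σ` and `τ` are induced by two matrices which generate `SL(2, 𝔽₇)`
(each elementary transvection is a short word in them), so `⟨σ, τ⟩` is the image of the embedding.
-/

open Equiv

/-- `PSL(2,7)`: the quotient of `SL(2, ℤ/7ℤ)` by its center. -/
abbrev PSL27 :=
  Matrix.SpecialLinearGroup (Fin 2) (ZMod 7) ⧸
    Subgroup.center (Matrix.SpecialLinearGroup (Fin 2) (ZMod 7))

open Matrix MatrixGroups

open scoped LinearAlgebra.Projectivization

namespace Matrix.SpecialLinearGroup

theorem card_mul_card_units {n R : Type*} [Fintype n] [DecidableEq n] [Nonempty n] [CommRing R] :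
    Nat.card (SpecialLinearGroup n R) * Nat.card Rˣ = Nat.card (GL n R) := by
  let det : GL n R →* Rˣ := GeneralLinearGroup.det
  have hSL : Nat.card (SpecialLinearGroup n R) = Nat.card det.ker := by
    rw [← Nat.card_range_of_injective (toGL_injective (n := n) (R := R)), range_toGL]
    rfl
  rw [← Subgroup.card_mul_index det.ker, Subgroup.index_ker,
    MonoidHom.range_eq_top.mpr GeneralLinearGroup.det_surjective, Subgroup.card_top, hSL]

theorem card_center_SL2 {R : Type*} [CommRing R] [IsDomain R] (hR : ringChar R ≠ 2) :
    Nat.card (Subgroup.center SL(2, R)) = 2 := by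
  rw [Nat.card_congr center_equiv_rootsOfUnity.toEquiv, Fintype.card_fin]
  exact (IsPrimitiveRoot.neg_one (ringChar R) hR).card_rootsOfUnity

theorem transvection_nsmul {ι F : Type*} [Fintype ι] [DecidableEq ι] [Field F] {i j : ι}
    (hij : i ≠ j) (b : F) (m : ℕ) : transvection hij (m • b) = transvection hij b ^ m := by
  induction m with
  | zero => rw [zero_smul, transvection_coeff_zero, pow_zero]
  | succ m ih => rw [succ_nsmul, transvection_add, ih, pow_succ]

theorem eq_top_of_transvection_one_mem {p : ℕ} [Fact p.Prime] {H : Subgroup SL(2, ZMod p)}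
    (h₀₁ : transvection zero_ne_one (1 : ZMod p) ∈ H)
    (h₁₀ : transvection one_ne_zero (1 : ZMod p) ∈ H) : H = ⊤ := by
  refine eq_top_iff.mpr fun g _ => SL2.transvection_induction (· ∈ H) (fun i j hij c => ?_)
    (fun _ _ => mul_mem) g
  rw [← ZMod.natCast_zmod_val c, ← nsmul_one, transvection_nsmul]
  fin_cases i <;> fin_cases j
  all_goals first | exact absurd rfl hij | exact pow_mem h₀₁ _ | exact pow_mem h₁₀ _

end Matrix.SpecialLinearGroup

instance fact_prime_seven : Fact (Nat.Prime 7) := ⟨by norm_num⟩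

theorem card_PSL27 : Nat.card PSL27 = 168 := by
  have hGL : Nat.card (GL (Fin 2) (ZMod 7)) = 2016 := by rw [card_GL_field, ZMod.card]; decide
  have hunits : Nat.card (ZMod 7)ˣ = 6 := by rw [Nat.card_eq_fintype_card, ZMod.card_units]
  have hSL := SpecialLinearGroup.card_mul_card_units (n := Fin 2) (R := ZMod 7)
  rw [hunits, hGL] at hSL
  have hZ := SpecialLinearGroup.card_center_SL2 (R := ZMod 7) (by rw [ZMod.ringChar_zmod_n]; decide)
  have hPSL := Subgroup.card_eq_card_quotient_mul_card_subgroup (Subgroup.center SL(2, ZMod 7))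
  rw [hZ] at hPSL
  change Nat.card SL(2, ZMod 7) = Nat.card PSL27 * 2 at hPSL
  omega

def sigmaSL : SL(2, ZMod 7) := ⟨!![2, 0; 5, 4], by decide⟩

def tauSL : SL(2, ZMod 7) := ⟨!![1, 6; 3, 5], by decide⟩

theorem closure_sigmaSL_tauSL : Subgroup.closure {sigmaSL, tauSL} = ⊤ := by
  have hσ : sigmaSL ∈ Subgroup.closure {sigmaSL, tauSL} := Subgroup.subset_closure (by simp)
  have hτ : tauSL ∈ Subgroup.closure {sigmaSL, tauSL} := Subgroup.subset_closure (by simp)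
  refine SpecialLinearGroup.eq_top_of_transvection_one_mem ?_ ?_
  · have hword : (SpecialLinearGroup.transvection zero_ne_one 1 : SL(2, ZMod 7)) =
        tauSL⁻¹ * sigmaSL⁻¹ * tauSL * sigmaSL⁻¹ * tauSL⁻¹ := by
      decide
    rw [hword]
    exact mul_mem (mul_mem (mul_mem (mul_mem (inv_mem hτ) (inv_mem hσ)) hτ) (inv_mem hσ))
      (inv_mem hτ)
  · have hword : (SpecialLinearGroup.transvection one_ne_zero 1 : SL(2, ZMod 7)) =
        sigmaSL * tauSL * sigmaSL * tauSL⁻¹ := by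
      decide
    rw [hword]
    exact mul_mem (mul_mem (mul_mem hσ hτ) hσ) (inv_mem hτ)

/-- Homogeneous coordinates of the point labelled `i + 1`; in the affine coordinate `x / y` the
labels `1, …, 8` are `0, 1, 2, 5, 3, ∞, 6, 4`. -/
def pointCoords : Fin 8 → Fin 2 → ZMod 7 :=
  ![![0, 1], ![1, 1], ![2, 1], ![5, 1], ![3, 1], ![1, 0], ![6, 1], ![4, 1]]

theorem pointCoords_ne_zero (i : Fin 8) : pointCoords i ≠ 0 := by
  revert i; decide

def point (i : Fin 8) : ℙ (ZMod 7) (Fin 2 → ZMod 7) :=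
  .mk _ (pointCoords i) (pointCoords_ne_zero i)

theorem point_bijective : Function.Bijective point := by
  refine ⟨fun i j h => ?_, fun x => ?_⟩
  · rw [point, point, Projectivization.mk_eq_mk_iff'] at h
    revert i j; decide
  · induction x using Projectivization.ind with
    | h v hv =>
      obtain ⟨i, a, ha⟩ : ∃ i, ∃ a : ZMod 7, a • v = pointCoords i := by revert v; decide
      exact ⟨i, (Projectivization.mk_eq_mk_iff' _ _ _ _ _).mpr ⟨a, ha⟩⟩

noncomputable def pointEquiv : Fin 8 ≃ ℙ (ZMod 7) (Fin 2 → ZMod 7) :=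
  .ofBijective point point_bijective

noncomputable def permRep : PSL27 →* Perm (Fin 8) :=
  pointEquiv.symm.permCongrHom.toMonoidHom.comp Projectivization.PSLAction.toPermHom

theorem permRep_injective : Function.Injective permRep :=
  pointEquiv.symm.permCongrHom.injective.comp ProjectiveSpecialLinearGroup.toPermHom_injective

theorem permRep_mk_eq {g : SL(2, ZMod 7)} {π : Perm (Fin 8)}
    (h : ∀ i, ∃ a : ZMod 7, a • pointCoords (π i) = g • pointCoords i) :
    permRep (QuotientGroup.mk g) = π := by
  refine Equiv.ext fun i => ?_
  change pointEquiv.symm (g • point i) = π i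
  rw [Equiv.symm_apply_eq]
  change g • point i = point (π i)
  rw [point, point, Projectivization.smul_mk, Projectivization.mk_eq_mk_iff']
  exact h i

theorem permRep_sigmaSL :
    permRep (QuotientGroup.mk sigmaSL) = c[(2 : Fin 8), 5, 6] * c[(3 : Fin 8), 4, 7] :=
  permRep_mk_eq (by decide)

theorem permRep_tauSL :
    permRep (QuotientGroup.mk tauSL) = c[(0 : Fin 8), 7, 1] * c[(3 : Fin 8), 4, 5] :=
  permRep_mk_eq (by decide)

theorem range_permRep :
    permRep.range = Subgroup.closure
      {c[(2 : Fin 8), 5, 6] * c[(3 : Fin 8), 4, 7],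
        c[(0 : Fin 8), 7, 1] * c[(3 : Fin 8), 4, 5]} := by
  have hgen : (⊤ : Subgroup PSL27) =
      Subgroup.closure {QuotientGroup.mk sigmaSL, QuotientGroup.mk tauSL} := by
    rw [← Subgroup.map_top_of_surjective _ (QuotientGroup.mk'_surjective _),
      ← closure_sigmaSL_tauSL, MonoidHom.map_closure, Set.image_pair]
    rfl
  rw [MonoidHom.range_eq_map, hgen, MonoidHom.map_closure, Set.image_pair, permRep_sigmaSL,
    permRep_tauSL]

/-- In `S₈ = Equiv.Perm (Fin 8)` (on the letters `1,…,8`, identified with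
`0,…,7` in `Fin 8` via `i ↦ i − 1`), the subgroup generated by
`σ = (3 6 7)(4 5 8)` and `τ = (1 8 2)(4 5 6)` has order `168` and is
isomorphic to `PSL(2,7)`. -/
theorem closure_perms_card_168_iso_PSL27 :
    Nat.card (Subgroup.closure
        ({c[(2 : Fin 8), 5, 6] * c[(3 : Fin 8), 4, 7],
          c[(0 : Fin 8), 7, 1] * c[(3 : Fin 8), 4, 5]} : Set (Equiv.Perm (Fin 8)))) = 168 ∧
    Nonempty ((Subgroup.closure
        ({c[(2 : Fin 8), 5, 6] * c[(3 : Fin 8), 4, 7],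
          c[(0 : Fin 8), 7, 1] * c[(3 : Fin 8), 4, 5]} : Set (Equiv.Perm (Fin 8)))) ≃* PSL27) := by
  let e := (MulEquiv.subgroupCongr range_permRep.symm).trans
    (MonoidHom.ofInjective permRep_injective).symm
  exact ⟨(Nat.card_congr e.toEquiv).trans card_PSL27, ⟨e⟩⟩
end

section
/- Let 𝕋(7,3,3) be the group presented by generators c₁, c₂, c₃ subject to the relations c₁⁷ = c₂³ = c₃³ = c₁c₂c₃ = 1. Then there exists a surjective group homomorphism φ : 𝕋(7,3,3) → PSL(2,7) such that orderOf φ(c₁) = 7, orderOf φ(c₂) = 3, and orderOf φ(c₃) = 3. -/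
/-- The relators of the polygonal group `𝕋(7,3,3)`:
`c₁⁷, c₂³, c₃³, c₁c₂c₃`. -/
def rels733 : Set (FreeGroup (Fin 3)) :=
  {FreeGroup.of 0 ^ 7, FreeGroup.of 1 ^ 3, FreeGroup.of 2 ^ 3,
    FreeGroup.of 0 * FreeGroup.of 1 * FreeGroup.of 2}

/-- The polygonal group `𝕋(7,3,3) = ⟨c₁,c₂,c₃ ∣ c₁⁷ = c₂³ = c₃³ = c₁c₂c₃ = 1⟩`. -/
abbrev T733 : Type := PresentedGroup rels733

/-!
Take `u = [[1,1],[0,1]]` and `b = [[0,3],[2,6]]` in `SL(2,7)` and `c = (u b)⁻¹ = [[6,5],[5,2]]`.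
Since `b` and `c` have traces `-1` and `1`, `b³ = 1` and `c³ = -1`, so the images of `u, b, c` in
`PSL(2,7)` satisfy the relations of `𝕋(7,3,3)`; none of them is scalar, so their orders are the
primes `7, 3, 3`. Conjugating a power of `u` by `b` gives the lower elementary transvection, and
`SL(2, 𝔽_p)` is generated by the two elementary transvections, so `u` and `b` already generate
`SL(2,7)` and the induced homomorphism is onto.
-/

open Matrix Matrix.SpecialLinearGroup
open scoped MatrixGroups

namespace Matrix.SpecialLinearGroup

variable {ι R : Type*} [Fintype ι] [DecidableEq ι] [CommRing R]

lemma transvection_natCast {i j : ι} (hij : i ≠ j) (n : ℕ) :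
    transvection hij (n : R) = transvection hij 1 ^ n := by
  induction n with
  | zero => simp
  | succ n ih => rw [Nat.cast_succ, transvection_add, ih, pow_succ]

lemma notMem_center_of_ne_zero {g : SpecialLinearGroup ι R} {i j : ι} (hij : i ≠ j)
    (hg : g i j ≠ 0) : g ∉ Subgroup.center (SpecialLinearGroup ι R) := by
  intro hc
  obtain ⟨r, -, hr⟩ := mem_center_iff.1 hc
  exact hg (by simp [← hr, hij])

lemma transvection_mem_zpowers {p : ℕ} [NeZero p] {i j : ι} (hij : i ≠ j) (x : ZMod p) :
    transvection hij x ∈ Subgroup.zpowers (transvection hij 1) := by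
  rw [← ZMod.natCast_zmod_val x, transvection_natCast]
  exact Subgroup.npow_mem_zpowers _ _

lemma SL2.closure_transvection_one_eq_top (p : ℕ) [Fact p.Prime] :
    Subgroup.closure {transvection zero_ne_one 1, transvection one_ne_zero 1} =
      (⊤ : Subgroup SL(2, ZMod p)) := by
  refine eq_top_iff.2 fun g _ ↦
    SL2.transvection_induction _ (fun i j hij x ↦ ?_) (fun _ _ ↦ mul_mem) g
  have hgen : transvection hij (1 : ZMod p) ∈
      Subgroup.closure {transvection zero_ne_one 1, transvection one_ne_zero 1} := by
    fin_cases i <;> fin_cases j <;>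
      first | exact absurd rfl hij | exact Subgroup.subset_closure (by simp)
  exact Subgroup.zpowers_le_of_mem hgen (transvection_mem_zpowers hij x)

lemma neg_one_mem_center [Fact (Even (Fintype.card ι))] :
    -1 ∈ Subgroup.center (SpecialLinearGroup ι R) :=
  Subgroup.mem_center_iff.2 fun g ↦ (Commute.neg_one_right g).eq

end Matrix.SpecialLinearGroup

lemma QuotientGroup.orderOf_mk_eq_prime {G : Type*} [Group G] {N : Subgroup G} [N.Normal]
    {g : G} {p : ℕ} [Fact p.Prime] (hp : g ^ p ∈ N) (hg : g ∉ N) :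
    orderOf (g : G ⧸ N) = p :=
  orderOf_eq_prime (by rwa [← QuotientGroup.mk_pow, QuotientGroup.eq_one_iff])
    (by rwa [Ne, QuotientGroup.eq_one_iff])

namespace OrbifoldHom733

instance : Fact (Nat.Prime 7) := ⟨by norm_num⟩

def u : SL(2, ZMod 7) := transvection zero_ne_one 1

def b : SL(2, ZMod 7) := ⟨!![0, 3; 2, 6], by decide⟩

def c : SL(2, ZMod 7) := ⟨!![6, 5; 5, 2], by decide⟩

lemma u_pow_seven : u ^ 7 = 1 := by
  rw [u, ← transvection_natCast, ZMod.natCast_self, transvection_coeff_zero]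

lemma b_pow_three : b ^ 3 = 1 := by decide

lemma c_pow_three : c ^ 3 = -1 := by decide

lemma u_mul_b_mul_c : u * b * c = 1 := by decide

lemma b_mul_u_pow_five_mul_b_inv : b * u ^ 5 * b⁻¹ = transvection one_ne_zero 1 := by decide

lemma closure_u_b_eq_top : Subgroup.closure {u, b} = ⊤ := by
  have hu : u ∈ Subgroup.closure {u, b} := Subgroup.subset_closure (by simp)
  have hb : b ∈ Subgroup.closure {u, b} := Subgroup.subset_closure (by simp)
  refine eq_top_iff.2 ((SL2.closure_transvection_one_eq_top 7).symm.le.trans ?_)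
  rw [Subgroup.closure_le, Set.insert_subset_iff, Set.singleton_subset_iff,
    ← b_mul_u_pow_five_mul_b_inv]
  exact ⟨hu, mul_mem (mul_mem hb (pow_mem hu 5)) (inv_mem hb)⟩

def generatorImage : Fin 3 → PSL27
  | 0 => (u : SL(2, ZMod 7))
  | 1 => (b : SL(2, ZMod 7))
  | 2 => (c : SL(2, ZMod 7))

lemma generatorImage_rels : ∀ r ∈ rels733, FreeGroup.lift generatorImage r = 1 := by
  simp only [rels733, Set.mem_insert_iff, Set.mem_singleton_iff]
  rintro r (rfl | rfl | rfl | rfl)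
  all_goals simp only [map_pow, map_mul, FreeGroup.lift_apply_of, generatorImage,
    ← QuotientGroup.mk_pow, ← QuotientGroup.mk_mul, QuotientGroup.eq_one_iff]
  · rw [u_pow_seven]; exact one_mem _
  · rw [b_pow_three]; exact one_mem _
  · rw [c_pow_three]; exact neg_one_mem_center
  · rw [u_mul_b_mul_c]; exact one_mem _

lemma surjective_toGroup_generatorImage :
    Function.Surjective (PresentedGroup.toGroup generatorImage_rels) := by
  set φ := PresentedGroup.toGroup generatorImage_rels
  have hgen : Subgroup.closure {u, b} ≤ φ.range.comap (QuotientGroup.mk' _) := by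
    rw [Subgroup.closure_le, Set.insert_subset_iff, Set.singleton_subset_iff]
    exact ⟨⟨PresentedGroup.of 0, PresentedGroup.toGroup.of _⟩,
      ⟨PresentedGroup.of 1, PresentedGroup.toGroup.of _⟩⟩
  rintro ⟨g⟩
  exact hgen (closure_u_b_eq_top ▸ Subgroup.mem_top g)

end OrbifoldHom733

open OrbifoldHom733

/-- There is a surjective homomorphism `𝕋(7,3,3) → PSL(2,7)` sending the
generators `c₁, c₂, c₃` to elements of orders exactly `7, 3, 3`
(an appropriate orbifold homomorphism). -/
theorem exists_appropriate_orbifold_hom_733 :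
    ∃ φ : T733 →* PSL27, Function.Surjective φ ∧
      orderOf (φ (PresentedGroup.of 0)) = 7 ∧
      orderOf (φ (PresentedGroup.of 1)) = 3 ∧
      orderOf (φ (PresentedGroup.of 2)) = 3 := by
  refine ⟨PresentedGroup.toGroup generatorImage_rels, surjective_toGroup_generatorImage,
    ?_, ?_, ?_⟩
  all_goals simp only [PresentedGroup.toGroup.of, generatorImage]
  · exact QuotientGroup.orderOf_mk_eq_prime (by rw [u_pow_seven]; exact one_mem _)
      (notMem_center_of_ne_zero zero_ne_one (by decide))
  · exact QuotientGroup.orderOf_mk_eq_prime (by rw [b_pow_three]; exact one_mem _)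
      (notMem_center_of_ne_zero zero_ne_one (by decide))
  · exact QuotientGroup.orderOf_mk_eq_prime (by rw [c_pow_three]; exact neg_one_mem_center)
      (notMem_center_of_ne_zero zero_ne_one (by decide))
end

section
/- The alternating group A₅ on 5 letters admits a spherical system of generators of signature (2,5,5): there exist elements g₁, g₂, g₃ of the alternating group on Fin 5 with orderOf g₁ = 2, orderOf g₂ = 5, orderOf g₃ = 5, g₁·g₂·g₃ = 1, and such that g₁, g₂, g₃ generate the whole alternating group. -/
open Equiv

set_option maxRecDepth 10000

private instance : Fact (Nat.Prime 5) := ⟨by norm_num⟩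

private def A5p1 : Equiv.Perm (Fin 5) := c[0, 2] * c[1, 3]
private def A5p2 : Equiv.Perm (Fin 5) := c[0, 1, 2, 3, 4]

private lemma A5p1_mem : A5p1 ∈ alternatingGroup (Fin 5) := by
  rw [Equiv.Perm.mem_alternatingGroup]; decide

private lemma A5p2_mem : A5p2 ∈ alternatingGroup (Fin 5) := by
  rw [Equiv.Perm.mem_alternatingGroup]; decide

private lemma A5_card : Nat.card (alternatingGroup (Fin 5)) = 60 := by
  have h := two_mul_card_alternatingGroup (α := Fin 5)
  rw [Fintype.card_perm, Fintype.card_fin, show Nat.factorial 5 = 120 from rfl] at h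
  rw [Nat.card_eq_fintype_card]
  omega

/-- The alternating group `A₅` admits a spherical system of generators of
signature `(2,5,5)`: elements `g₁, g₂, g₃` of orders `2, 5, 5` with
`g₁g₂g₃ = 1` generating the whole group. -/
theorem A5_spherical_system_255 :
    ∃ g₁ g₂ g₃ : alternatingGroup (Fin 5),
      orderOf g₁ = 2 ∧ orderOf g₂ = 5 ∧ orderOf g₃ = 5 ∧
      g₁ * g₂ * g₃ = 1 ∧
      Subgroup.closure ({g₁, g₂, g₃} : Set (alternatingGroup (Fin 5))) = ⊤ := by
  set G := alternatingGroup (Fin 5)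
  refine ⟨⟨A5p1, A5p1_mem⟩, ⟨A5p2, A5p2_mem⟩, (⟨A5p1, A5p1_mem⟩ * ⟨A5p2, A5p2_mem⟩)⁻¹,
    ?_, ?_, ?_, by group, ?_⟩
  · rw [Subgroup.orderOf_mk]
    exact orderOf_eq_prime (by decide) (by decide)
  · rw [Subgroup.orderOf_mk]
    exact orderOf_eq_prime (by decide) (by decide)
  · rw [orderOf_inv, Subgroup.orderOf_mk]
    exact orderOf_eq_prime (p := 5) (by decide) (by decide)
  · set g₁ : G := ⟨A5p1, A5p1_mem⟩ with hg₁
    set g₂ : G := ⟨A5p2, A5p2_mem⟩ with hg₂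
    set H := Subgroup.closure ({g₁, g₂, (g₁ * g₂)⁻¹} : Set G) with hH
    have hg1H : g₁ ∈ H := Subgroup.subset_closure (by simp)
    have hg2H : g₂ ∈ H := Subgroup.subset_closure (by simp)
    have hwH : g₁ * g₂ ^ 2 ∈ H := H.mul_mem hg1H (H.pow_mem hg2H 2)
    -- orders of elements of H divide the cardinality of H
    have hdvd : ∀ (x : G), x ∈ H → orderOf x ∣ Nat.card H := by
      intro x hx
      have : orderOf (⟨x, hx⟩ : H) ∣ Nat.card H := orderOf_dvd_natCard _
      rwa [Subgroup.orderOf_mk] at this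
    have h2 : (2 : ℕ) ∣ Nat.card H := by
      have := hdvd g₁ hg1H
      rwa [Subgroup.orderOf_mk, orderOf_eq_prime (p := 2) (by decide) (by decide)] at this
    have h3 : (3 : ℕ) ∣ Nat.card H := by
      have h := hdvd _ hwH
      have hw : orderOf (g₁ * g₂ ^ 2) = 3 := by
        have : ((g₁ * g₂ ^ 2 : G) : Equiv.Perm (Fin 5)) = A5p1 * A5p2 ^ 2 := rfl
        rw [← Subgroup.orderOf_coe, this]
        exact orderOf_eq_prime (by decide) (by decide)
      rwa [hw] at h
    have h5 : (5 : ℕ) ∣ Nat.card H := by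
      have := hdvd g₂ hg2H
      rwa [Subgroup.orderOf_mk, orderOf_eq_prime (p := 5) (by decide) (by decide)] at this
    have hcard_dvd : Nat.card H ∣ 60 := A5_card ▸ Subgroup.card_subgroup_dvd_card H
    have hle : Nat.card H ≤ 60 := Nat.le_of_dvd (by norm_num) hcard_dvd
    have hpos : 0 < Nat.card H := Nat.card_pos
    have hcases : Nat.card H = 30 ∨ Nat.card H = 60 := by omega
    rcases hcases with h30 | h60
    · -- card 30 is impossible: index 2, use simplicity of A₅
      exfalso
      have hindex : H.index = 2 := by
        have := Subgroup.card_mul_index H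
        rw [h30, A5_card] at this
        omega
      have hne_top : H ≠ ⊤ := by
        intro ht
        rw [ht, Subgroup.card_top, A5_card] at h30
        omega
      have hcore : H.normalCore = ⊥ ∨ H.normalCore = ⊤ :=
        (Subgroup.normalCore_normal H).eq_bot_or_eq_top
      rcases hcore with hbot | htop
      · -- then G embeds into Perm (G ⧸ H), of cardinality 2! = 2
        have hker : (MulAction.toPermHom G (G ⧸ H)).ker = ⊥ := by
          rw [← Subgroup.normalCore_eq_ker]; exact hbot
        have hinj : Function.Injective (MulAction.toPermHom G (G ⧸ H)) :=
          (MulAction.toPermHom G (G ⧸ H)).ker_eq_bot_iff.mp hker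
        have hle2 : Nat.card G ≤ Nat.card (Equiv.Perm (G ⧸ H)) :=
          Nat.card_le_card_of_injective _ hinj
        have hq : Nat.card (G ⧸ H) = 2 := hindex
        have e : G ⧸ H ≃ Fin 2 := by
          have e0 := Nat.equivFinOfCardPos (α := G ⧸ H) (by omega)
          rwa [hq] at e0
        have h2' : Nat.card (Equiv.Perm (G ⧸ H)) = 2 := by
          rw [Nat.card_congr e.permCongr, Nat.card_eq_fintype_card, Fintype.card_perm]
          simp [Nat.factorial]
        rw [h2', A5_card] at hle2
        omega
      · exact hne_top (top_le_iff.mp (htop ▸ Subgroup.normalCore_le H))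
    · -- card 60 means H = ⊤
      exact Subgroup.eq_top_of_card_eq H (by rw [h60, A5_card])
end

section
/- The alternating group A₅ on 5 letters admits a spherical system of generators of signature (3,3,3,3): there exist elements g₁, g₂, g₃, g₄ of the alternating group on Fin 5, each of order 3, with g₁·g₂·g₃·g₄ = 1, generating the whole alternating group. -/
/-! Take `g = (0 1 2)`, `h = (2 3 4)` and the system `(g, h, h⁻¹, g⁻¹)`. The subgroup it
generates contains `g` (order 3), `gh` (a 5-cycle) and `ghgh⁻¹ = (0 2)(1 3)`, so its order
is divisible by 30 and its index in `A₅` is at most 2. A subgroup of index 2 is normal,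
which the simplicity of `A₅` rules out. -/

open Equiv Subgroup

theorem Subgroup.eq_top_of_card_dvd_two_mul {G : Type*} [Group G] [Finite G] [IsSimpleGroup G]
    {H : Subgroup G} (hH : H ≠ ⊥) (h : Nat.card G ∣ 2 * Nat.card H) : H = ⊤ := by
  have hindex : H.index ∣ 2 := by
    rw [← card_mul_index H, mul_comm 2] at h
    exact Nat.dvd_of_mul_dvd_mul_left Nat.card_pos h
  rcases (Nat.dvd_prime Nat.prime_two).mp hindex with hone | htwo
  · exact index_eq_one.mp hone
  · exact (normal_of_index_eq_two htwo).eq_bot_or_eq_top.resolve_left hH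

namespace alternatingGroup

theorem nat_card_fin_five : Nat.card (alternatingGroup (Fin 5)) = 60 := by
  rw [nat_card_alternatingGroup, Nat.card_fin]
  rfl

def cycle012 : alternatingGroup (Fin 5) :=
  ⟨c[0, 1, 2], by rw [Perm.mem_alternatingGroup]; decide⟩

def cycle234 : alternatingGroup (Fin 5) :=
  ⟨c[2, 3, 4], by rw [Perm.mem_alternatingGroup]; decide⟩

theorem orderOf_cycle012 : orderOf cycle012 = 3 :=
  orderOf_eq_prime (Subtype.ext (by decide)) (ne_of_apply_ne Subtype.val (by decide))

theorem orderOf_cycle234 : orderOf cycle234 = 3 :=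
  orderOf_eq_prime (Subtype.ext (by decide)) (ne_of_apply_ne Subtype.val (by decide))

set_option maxRecDepth 10000 in
theorem orderOf_cycle012_mul_cycle234 : orderOf (cycle012 * cycle234) = 5 :=
  have : Fact (Nat.Prime 5) := ⟨by norm_num⟩
  orderOf_eq_prime (Subtype.ext (by decide)) (ne_of_apply_ne Subtype.val (by decide))

theorem orderOf_cycle012_mul_cycle234_mul_cycle012_mul_cycle234_inv :
    orderOf (cycle012 * cycle234 * cycle012 * cycle234⁻¹) = 2 :=
  orderOf_eq_prime (Subtype.ext (by decide)) (ne_of_apply_ne Subtype.val (by decide))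

theorem eq_top_of_cycle012_mem_of_cycle234_mem {H : Subgroup (alternatingGroup (Fin 5))}
    (hg : cycle012 ∈ H) (hh : cycle234 ∈ H) : H = ⊤ := by
  have h2 : 2 ∣ Nat.card H :=
    orderOf_cycle012_mul_cycle234_mul_cycle012_mul_cycle234_inv.symm.dvd.trans <|
      H.orderOf_dvd_natCard (H.mul_mem (H.mul_mem (H.mul_mem hg hh) hg) (H.inv_mem hh))
  have h3 : 3 ∣ Nat.card H := orderOf_cycle012.symm.dvd.trans (H.orderOf_dvd_natCard hg)
  have h5 : 5 ∣ Nat.card H :=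
    orderOf_cycle012_mul_cycle234.symm.dvd.trans (H.orderOf_dvd_natCard (H.mul_mem hg hh))
  have h30 : 30 ∣ Nat.card H :=
    Nat.Coprime.mul_dvd_of_dvd_of_dvd (by norm_num)
      (Nat.Coprime.mul_dvd_of_dvd_of_dvd (by norm_num) h2 h3) h5
  refine eq_top_of_card_dvd_two_mul ?_ ?_
  · rintro rfl
    norm_num at h30
  · rw [nat_card_fin_five]
    omega

end alternatingGroup

/-- The alternating group `A₅` admits a spherical system of generators of
signature `(3,3,3,3)`: elements `g₁, g₂, g₃, g₄`, each of order `3`, with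
`g₁g₂g₃g₄ = 1`, generating the whole group. -/
theorem A5_spherical_system_3333 :
    ∃ g₁ g₂ g₃ g₄ : alternatingGroup (Fin 5),
      orderOf g₁ = 3 ∧ orderOf g₂ = 3 ∧ orderOf g₃ = 3 ∧ orderOf g₄ = 3 ∧
      g₁ * g₂ * g₃ * g₄ = 1 ∧
      Subgroup.closure ({g₁, g₂, g₃, g₄} : Set (alternatingGroup (Fin 5))) = ⊤ := by
  open alternatingGroup in
  refine ⟨cycle012, cycle234, cycle234⁻¹, cycle012⁻¹, orderOf_cycle012, orderOf_cycle234,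
    by rw [orderOf_inv, orderOf_cycle234], by rw [orderOf_inv, orderOf_cycle012], by group,
    eq_top_of_cycle012_mem_of_cycle234_mem (subset_closure (by simp)) (subset_closure (by simp))⟩
end

section
/- The symmetric group S₄ on 4 letters admits a spherical system of generators of signature (3,4,4): there exist permutations g₁, g₂, g₃ in Equiv.Perm (Fin 4) with orderOf g₁ = 3, orderOf g₂ = 4, orderOf g₃ = 4, g₁·g₂·g₃ = 1, which generate the whole symmetric group on Fin 4. -/
/-! Take the 3-cycle `g₁ = (0 1 2)`, the 4-cycle `g₂ = (0 1 2 3)` and `g₃ = (g₁ g₂)⁻¹ = (0 1 3 2)`.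
The orders are the cycle lengths, and the group generated contains the full 4-cycle `g₂` together
with the adjacent transposition `g₁⁻¹ g₂ = (2 3) = (2, g₂ 2)`, which already generate `S₄`. -/

open Equiv Equiv.Perm

theorem List.orderOf_formPerm {α : Type*} [Fintype α] [DecidableEq α] {l : List α}
    (hl : l.Nodup) (hn : 2 ≤ l.length) : orderOf l.formPerm = l.length := by
  have h_ne_singleton : ∀ x, l ≠ [x] := by
    rintro x rfl
    simp at hn
  rw [(isCycle_formPerm hl hn).orderOf, support_formPerm_of_nodup l hl h_ne_singleton,
    List.toFinset_card_of_nodup hl]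

theorem Equiv.Perm.eq_top_of_isCycle_mem_of_swap_mem {α : Type*} [Fintype α] [DecidableEq α]
    {σ : Perm α} (hσ : σ.IsCycle) (hsupp : σ.support = Finset.univ) (x : α)
    {H : Subgroup (Perm α)} (hσH : σ ∈ H) (hswap : swap x (σ x) ∈ H) : H = ⊤ := by
  rw [eq_top_iff, ← closure_cycle_adjacent_swap hσ hsupp x, Subgroup.closure_le]
  rintro τ (rfl | rfl)
  exacts [hσH, hswap]

/-- The symmetric group `S₄` admits a spherical system of generators of
signature `(3,4,4)`: permutations `g₁, g₂, g₃` of orders `3, 4, 4` with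
`g₁g₂g₃ = 1` generating the whole symmetric group. -/
theorem S4_spherical_system_344 :
    ∃ g₁ g₂ g₃ : Equiv.Perm (Fin 4),
      orderOf g₁ = 3 ∧ orderOf g₂ = 4 ∧ orderOf g₃ = 4 ∧
      g₁ * g₂ * g₃ = 1 ∧
      Subgroup.closure ({g₁, g₂, g₃} : Set (Equiv.Perm (Fin 4))) = ⊤ := by
  let g₁ : Perm (Fin 4) := [0, 1, 2].formPerm
  let g₂ : Perm (Fin 4) := [0, 1, 2, 3].formPerm
  let g₃ : Perm (Fin 4) := [0, 1, 3, 2].formPerm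
  refine ⟨g₁, g₂, g₃, List.orderOf_formPerm (by decide) (by decide),
    List.orderOf_formPerm (by decide) (by decide), List.orderOf_formPerm (by decide) (by decide),
    by decide, ?_⟩
  have hg₂_cycle : g₂.IsCycle := List.isCycle_formPerm (by decide) (by decide)
  have hg₂_supp : g₂.support = Finset.univ := by decide
  have hswap : swap 2 (g₂ 2) = g₁⁻¹ * g₂ := by decide
  refine eq_top_of_isCycle_mem_of_swap_mem hg₂_cycle hg₂_supp 2
    (Subgroup.subset_closure (by simp)) ?_
  rw [hswap]
  exact mul_mem (inv_mem (Subgroup.subset_closure (by simp))) (Subgroup.subset_closure (by simp))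
end
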